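/- arXiv:0803.2211 — 3 statements merged into one kernel-verified Lean document; each statement's English description precedes it below -/
import Mathlib

section
/- Let (f_t) be a sequence of y-averaging maps on S^n forming an equiproper family, converging pointwise to a map g. Then g is a proper y-averaging map; that is, g maps the y-convex hull into itself and strictly shrinks the y-convex hull on every non-consensus profile. -/
/-!
Moving the vertices of a polytope by at most `ε` moves it by at most `ε` in Hausdorff distance,
so `y (f t x) → y (g x)` forces the hulls of `y (f t x)` to converge to the hull of `y (g x)`.
The inclusions `conv y(f t x) ⊆ conv y(x)` pass to the limit because the right side is closed.
If `g` failed to shrink the hull of a non-consensus `x`, the hulls of `y (f t x)` would converge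
to the hull of `y x`, contradicting the uniform gap `δ(x)` of equiproperness.
-/

open Filter Topology Metric

section ConvexHullRange

variable {ι E : Type*}

theorem exists_mem_convexHull_range_dist_le [NormedAddCommGroup E] [NormedSpace ℝ E]
    {a b : ι → E} {ε : ℝ} (h : ∀ j, dist (a j) (b j) ≤ ε)
    {p : E} (hp : p ∈ convexHull ℝ (Set.range a)) :
    ∃ q ∈ convexHull ℝ (Set.range b), dist p q ≤ ε := by
  rw [convexHull_range_eq_exists_affineCombination] at hp
  obtain ⟨s, w, hw₀, hw₁, rfl⟩ := hp
  refine ⟨s.affineCombination ℝ b w, affineCombination_mem_convexHull hw₀ hw₁, ?_⟩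
  rw [Finset.affineCombination_eq_linear_combination _ _ _ hw₁,
    Finset.affineCombination_eq_linear_combination _ _ _ hw₁, dist_eq_norm,
    ← Finset.sum_sub_distrib]
  simp_rw [← smul_sub]
  calc ‖∑ i ∈ s, w i • (a i - b i)‖ ≤ ∑ i ∈ s, ‖w i • (a i - b i)‖ := norm_sum_le _ _
    _ ≤ ∑ i ∈ s, w i * ε := Finset.sum_le_sum fun i hi => by
        rw [norm_smul, Real.norm_of_nonneg (hw₀ i hi), ← dist_eq_norm]
        exact mul_le_mul_of_nonneg_left (h i) (hw₀ i hi)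
    _ = ε := by rw [← Finset.sum_mul, hw₁, one_mul]

theorem hausdorffDist_convexHull_range_le [NormedAddCommGroup E] [NormedSpace ℝ E]
    {a b : ι → E} {ε : ℝ} (hε : 0 ≤ ε) (h : ∀ j, dist (a j) (b j) ≤ ε) :
    hausdorffDist (convexHull ℝ (Set.range a)) (convexHull ℝ (Set.range b)) ≤ ε :=
  hausdorffDist_le_of_mem_dist hε (fun _ => exists_mem_convexHull_range_dist_le h)
    (fun _ => exists_mem_convexHull_range_dist_le fun j => dist_comm (a j) (b j) ▸ h j)

theorem tendsto_hausdorffDist_convexHull_range [Fintype ι] [NormedAddCommGroup E]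
    [NormedSpace ℝ E] {α : Type*} {l : Filter α} {a : α → ι → E} {b : ι → E}
    (h : Tendsto a l (𝓝 b)) :
    Tendsto (fun t => hausdorffDist (convexHull ℝ (Set.range (a t))) (convexHull ℝ (Set.range b)))
      l (𝓝 0) :=
  squeeze_zero (fun _ => hausdorffDist_nonneg)
    (fun t => hausdorffDist_convexHull_range_le dist_nonneg (dist_le_pi_dist (a t) b))
    (tendsto_iff_dist_tendsto_zero.mp h)

theorem convexHull_range_subset_of_tendsto [AddCommGroup E] [Module ℝ E] [TopologicalSpace E]
    {α : Type*} {l : Filter α} [l.NeBot] {a : α → ι → E} {b : ι → E} {C : Set E}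
    (h : Tendsto a l (𝓝 b)) (hC : IsClosed C) (hCconv : Convex ℝ C)
    (hsub : ∀ᶠ t in l, convexHull ℝ (Set.range (a t)) ⊆ C) :
    convexHull ℝ (Set.range b) ⊆ C :=
  convexHull_min (Set.range_subset_iff.mpr fun j =>
    hC.mem_of_tendsto (tendsto_pi_nhds.mp h j)
      (hsub.mono fun _ ht => ht (subset_convexHull ℝ _ ⟨j, rfl⟩))) hCconv

end ConvexHullRange

theorem limit_of_equiproper_is_proper_general {d n m : ℕ}
    (S : Set (Fin d → ℝ)) (hScomp : IsCompact S)
    (y : (Fin n → Fin d → ℝ) → Fin m → Fin d → ℝ)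
    (hycont : ContinuousOn y {x | ∀ i, x i ∈ S})
    (f : ℕ → (Fin n → Fin d → ℝ) → (Fin n → Fin d → ℝ))
    (hmaps : ∀ t x, (∀ i, x i ∈ S) → ∀ i, f t x i ∈ S)
    (havg : ∀ t x, (∀ i, x i ∈ S) →
      convexHull ℝ (Set.range (y (f t x))) ⊆ convexHull ℝ (Set.range (y x)))
    (hequiproper : ∀ x, (∀ i, x i ∈ S) → (¬ ∀ i j, x i = x j) →
      ∃ δ > (0:ℝ), ∀ t, δ < Metric.hausdorffDist
        (convexHull ℝ (Set.range (y (f t x)))) (convexHull ℝ (Set.range (y x))))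
    (g : (Fin n → Fin d → ℝ) → (Fin n → Fin d → ℝ))
    (hlim : ∀ x, (∀ i, x i ∈ S) →
      Filter.Tendsto (fun t => f t x) Filter.atTop (nhds (g x))) :
    (∀ x, (∀ i, x i ∈ S) →
      convexHull ℝ (Set.range (y (g x))) ⊆ convexHull ℝ (Set.range (y x))) ∧
    (∀ x, (∀ i, x i ∈ S) → (¬ ∀ i j, x i = x j) →
      convexHull ℝ (Set.range (y (g x))) ⊂ convexHull ℝ (Set.range (y x))) := by
  have hgS : ∀ x, (∀ i, x i ∈ S) → ∀ i, g x i ∈ S := fun x hx i =>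
    hScomp.isClosed.mem_of_tendsto (tendsto_pi_nhds.mp (hlim x hx) i)
      (.of_forall fun t => hmaps t x hx i)
  have hy_lim : ∀ x, (∀ i, x i ∈ S) → Tendsto (fun t => y (f t x)) atTop (𝓝 (y (g x))) :=
    fun x hx => (hycont _ (hgS x hx)).tendsto.comp
      (tendsto_nhdsWithin_iff.mpr ⟨hlim x hx, .of_forall fun t => hmaps t x hx⟩)
  have hsub : ∀ x, (∀ i, x i ∈ S) →
      convexHull ℝ (Set.range (y (g x))) ⊆ convexHull ℝ (Set.range (y x)) := fun x hx =>
    convexHull_range_subset_of_tendsto (hy_lim x hx)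
      ((Set.finite_range _).isClosed_convexHull ℝ) (convex_convexHull ℝ _)
      (.of_forall fun t => havg t x hx)
  refine ⟨hsub, fun x hx hnc => (hsub x hx).ssubset_of_ne fun heq => ?_⟩
  obtain ⟨δ, hδ, hfar⟩ := hequiproper x hx hnc
  obtain ⟨t, ht⟩ :=
    ((tendsto_hausdorffDist_convexHull_range (hy_lim x hx)).eventually_lt_const hδ).exists
  rw [heq] at ht
  exact (hfar t).not_gt ht

/-- Pointwise limits of equiproper families of y-averaging maps are proper y-averaging
maps: if (f_t) is a sequence of y-averaging maps forming an equiproper family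
(in particular each f_t is proper) converging pointwise to g, then g is a proper
y-averaging map: it maps the y-convex hull into itself and strictly shrinks the
y-convex hull on every non-consensus profile. -/
theorem limit_of_equiproper_is_proper {d n m : ℕ}
    (S : Set (Fin d → ℝ)) (hScomp : IsCompact S)
    (y : (Fin n → Fin d → ℝ) → Fin m → Fin d → ℝ)
    (hycont : ContinuousOn y {x | ∀ i, x i ∈ S})
    (hyval : ∀ x, (∀ i, x i ∈ S) → ∀ j, y x j ∈ S)
    (hybary : ∀ x, (∀ i, x i ∈ S) → ∀ i, x i ∈ convexHull ℝ (Set.range (y x)))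
    (f : ℕ → (Fin n → Fin d → ℝ) → (Fin n → Fin d → ℝ))
    (hmaps : ∀ t x, (∀ i, x i ∈ S) → ∀ i, f t x i ∈ S)
    (havg : ∀ t x, (∀ i, x i ∈ S) →
      convexHull ℝ (Set.range (y (f t x))) ⊆ convexHull ℝ (Set.range (y x)))
    (hproper : ∀ t x, (∀ i, x i ∈ S) → (¬ ∀ i j, x i = x j) →
      convexHull ℝ (Set.range (y (f t x))) ⊂ convexHull ℝ (Set.range (y x)))
    (hequiproper : ∀ x, (∀ i, x i ∈ S) → (¬ ∀ i j, x i = x j) →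
      ∃ δ > (0:ℝ), ∀ t, δ < Metric.hausdorffDist
        (convexHull ℝ (Set.range (y (f t x)))) (convexHull ℝ (Set.range (y x))))
    (g : (Fin n → Fin d → ℝ) → (Fin n → Fin d → ℝ))
    (hlim : ∀ x, (∀ i, x i ∈ S) →
      Filter.Tendsto (fun t => f t x) Filter.atTop (nhds (g x))) :
    (∀ x, (∀ i, x i ∈ S) →
      convexHull ℝ (Set.range (y (g x))) ⊆ convexHull ℝ (Set.range (y x))) ∧
    (∀ x, (∀ i, x i ∈ S) → (¬ ∀ i j, x i = x j) →
      convexHull ℝ (Set.range (y (g x))) ⊂ convexHull ℝ (Set.range (y x))) :=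
  limit_of_equiproper_is_proper_general S hScomp y hycont f hmaps havg hequiproper g hlim
end

section
/- Consider the time-dependent linear system on ℝ² given by f_t(x¹,x²) = ((1 − 4^{−t})x¹ + 4^{−t}x², 4^{−t}x¹ + (1 − 4^{−t})x²). For the iteration x(t+1) = f_t(x(t)) with x(1) = (0,1), it holds for all t ≥ 1 that x¹(t) < 1/3 and x²(t) > 2/3; in particular the system does not converge to consensus. -/
/-!
The averaging step preserves x¹ + x² = 1 and multiplies the gap d = x² − x¹ by 1 − 2·4^{-t}.
Starting from d(1) = 1, the gap stays above 1/3 + (8/3)·4^{-t}: writing q = 4^{-t}, one step of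
the bound costs (1 − 2q)(1/3 + 8q/3) − (1/3 + 2q/3) = (4q/3)(1 − 4q) ≥ 0. Hence x¹ < 1/3 < 2/3 < x²
for all t ≥ 1, and the gap cannot shrink to 0.
-/

open Filter Topology

/-- The map `f_t` with weight `a = 4^{-t}`. -/
def averagingStep (a : ℝ) (p : ℝ × ℝ) : ℝ × ℝ :=
  ((1 - a) * p.1 + a * p.2, a * p.1 + (1 - a) * p.2)

lemma averagingStep_sum (a : ℝ) (p : ℝ × ℝ) :
    (averagingStep a p).1 + (averagingStep a p).2 = p.1 + p.2 := by
  simp only [averagingStep]; ring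

lemma averagingStep_gap (a : ℝ) (p : ℝ × ℝ) :
    (averagingStep a p).2 - (averagingStep a p).1 = (1 - 2 * a) * (p.2 - p.1) := by
  simp only [averagingStep]; ring

lemma gap_bound_step {q d : ℝ} (hq₀ : 0 ≤ q) (hq : q ≤ 1 / 4) (hd : 1 / 3 + 8 / 3 * q ≤ d) :
    1 / 3 + 8 / 3 * (q / 4) ≤ (1 - 2 * q) * d :=
  calc 1 / 3 + 8 / 3 * (q / 4)
      ≤ (1 - 2 * q) * (1 / 3 + 8 / 3 * q) := by nlinarith
    _ ≤ (1 - 2 * q) * d := by gcongr; linarith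

lemma sum_eq_one_and_gap_ge {x : ℕ → ℝ × ℝ} (h1 : x 1 = (0, 1))
    (hrec : ∀ t ≥ 1, x (t + 1) = averagingStep (1 / 4 ^ t) (x t)) :
    ∀ t ≥ 1, (x t).1 + (x t).2 = 1 ∧ 1 / 3 + 8 / 3 * (1 / 4 ^ t) ≤ (x t).2 - (x t).1 := by
  intro t ht
  induction t, ht using Nat.le_induction with
  | base => norm_num [h1]
  | succ t ht ih =>
    obtain ⟨hsum, hgap⟩ := ih
    have hq : (1 : ℝ) / 4 ^ t ≤ 1 / 4 := by
      gcongr; exact le_self_pow₀ (by norm_num) (by omega)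
    have hq' : (1 : ℝ) / 4 ^ (t + 1) = 1 / 4 ^ t / 4 := by rw [pow_succ, div_div]
    rw [hrec t ht, averagingStep_sum, averagingStep_gap, hq']
    exact ⟨hsum, gap_bound_step (by positivity) hq hgap⟩

lemma not_tendsto_common_of_gap {α : Type*} {l : Filter α} [l.NeBot] {u v : α → ℝ} {c : ℝ}
    (hc : 0 < c) (hgap : ∀ᶠ t in l, c ≤ v t - u t) :
    ¬ ∃ γ : ℝ, Tendsto u l (𝓝 γ) ∧ Tendsto v l (𝓝 γ) := by
  rintro ⟨γ, hu, hv⟩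
  have hlim : Tendsto (fun t => v t - u t) l (𝓝 0) := by simpa using hv.sub hu
  linarith [ge_of_tendsto hlim hgap]

/-- For f_t(x¹,x²) = ((1 − 4^{−t})x¹ + 4^{−t}x², 4^{−t}x¹ + (1 − 4^{−t})x²) and the
iteration x(t+1) = f_t(x(t)) with x(1) = (0,1), for all t ≥ 1 it holds x¹(t) < 1/3
and x²(t) > 2/3; in particular the system does not converge to consensus. -/
theorem non_equiproper_no_consensus (x : ℕ → ℝ × ℝ)
    (h1 : x 1 = (0, 1))
    (hrec : ∀ t ≥ 1, x (t + 1) =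
      ((1 - 1 / (4:ℝ) ^ t) * (x t).1 + (1 / (4:ℝ) ^ t) * (x t).2,
       (1 / (4:ℝ) ^ t) * (x t).1 + (1 - 1 / (4:ℝ) ^ t) * (x t).2)) :
    (∀ t ≥ 1, (x t).1 < 1 / 3 ∧ (x t).2 > 2 / 3) ∧
    ¬ ∃ γ : ℝ, Filter.Tendsto (fun t => (x t).1) Filter.atTop (nhds γ) ∧
        Filter.Tendsto (fun t => (x t).2) Filter.atTop (nhds γ) := by
  have hinv := sum_eq_one_and_gap_ge h1 hrec
  have hbounds : ∀ t ≥ 1, (x t).1 < 1 / 3 ∧ (x t).2 > 2 / 3 := by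
    intro t ht
    obtain ⟨hsum, hgap⟩ := hinv t ht
    have : (0 : ℝ) < 8 / 3 * (1 / 4 ^ t) := by positivity
    constructor <;> linarith
  refine ⟨hbounds, not_tendsto_common_of_gap (c := 1 / 3) (by norm_num) ?_⟩
  filter_upwards [eventually_ge_atTop 1] with t ht
  linarith [hbounds t ht]
end

section
/- A row-stochastic matrix A is scrambling if and only if the linear map x ↦ Ax is a proper averaging map on ℝ^n with y the identity; that is, for every x that is not a constant vector, the inclusion [min_i (Ax)^i, max_i (Ax)^i] ⊂ [min_i x^i, max_i x^i] is strict. -/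
/-!
Each row of a row-stochastic matrix averages `x`, so `A *ᵥ x` stays within `[min x, max x]`,
and row `l` attains `min x` only if `x j = min x` whenever `A l j > 0` (dually for `max x`).
If the rows attaining `min (A *ᵥ x)` and `max (A *ᵥ x)` share such a column `j`, both endpoints
can only be kept when `min x = x j = max x`. Conversely, if rows `i` and `k` have disjoint supports, the
indicator of the support of row `i` is sent to a vector equal to `1` at `i` and `0` at `k`, so
its range `[0, 1]` is not shrunk.
-/

open Set

lemma ciInf_lt_ciSup_of_not_forall_eq {α ι : Type*} [ConditionallyCompleteLinearOrder α]
    [Finite ι] {x : ι → α} (hx : ¬ ∀ i j, x i = x j) : ⨅ i, x i < ⨆ i, x i := by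
  contrapose! hx
  have hle (i j : ι) : x i ≤ x j :=
    (le_ciSup (Finite.bddAbove_range x) i).trans <|
      hx.trans (ciInf_le (Finite.bddBelow_range x) j)
  exact fun i j ↦ (hle i j).antisymm (hle j i)

namespace Matrix

variable {m ι : Type*} [Fintype ι]

def IsScrambling (A : Matrix m ι ℝ) : Prop :=
  ∀ i k, ∃ j, 0 < A i j ∧ 0 < A k j

def IsProperAveraging (f : (ι → ℝ) → ι → ℝ) : Prop :=
  ∀ x : ι → ℝ, (¬ ∀ i j, x i = x j) →
    Icc (⨅ i, f x i) (⨆ i, f x i) ⊂ Icc (⨅ i, x i) (⨆ i, x i)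

section RowStochastic

variable {A : Matrix m ι ℝ} (hnn : ∀ i j, 0 ≤ A i j) (hrow : ∀ i, ∑ j, A i j = 1)
include hnn hrow

omit hnn in
lemma mulVec_const_apply (c : ℝ) (l : m) : (A *ᵥ fun _ ↦ c) l = c := by
  rw [mulVec, dotProduct, ← Finset.sum_mul, hrow, one_mul]

lemma le_mulVec_apply {x : ι → ℝ} {a : ℝ} (h : ∀ j, a ≤ x j) (l : m) :
    a ≤ (A *ᵥ x) l := by
  calc a = (A *ᵥ fun _ ↦ a) l := (mulVec_const_apply hrow a l).symm
    _ ≤ (A *ᵥ x) l := Finset.sum_le_sum fun j _ ↦ mul_le_mul_of_nonneg_left (h j) (hnn l j)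

lemma lt_mulVec_apply {x : ι → ℝ} {a : ℝ} (h : ∀ j, a ≤ x j) {l : m} {j : ι}
    (hlj : 0 < A l j) (hj : a < x j) : a < (A *ᵥ x) l := by
  calc a = (A *ᵥ fun _ ↦ a) l := (mulVec_const_apply hrow a l).symm
    _ < (A *ᵥ x) l := Finset.sum_lt_sum (fun j _ ↦ mul_le_mul_of_nonneg_left (h j) (hnn l j))
        ⟨j, Finset.mem_univ j, mul_lt_mul_of_pos_left hj hlj⟩

lemma mulVec_apply_le {x : ι → ℝ} {b : ℝ} (h : ∀ j, x j ≤ b) (l : m) :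
    (A *ᵥ x) l ≤ b := by
  simpa [mulVec_neg] using
    le_mulVec_apply hnn hrow (x := -x) (a := -b) (fun j ↦ neg_le_neg (h j)) l

lemma mulVec_apply_lt {x : ι → ℝ} {b : ℝ} (h : ∀ j, x j ≤ b) {l : m} {j : ι}
    (hlj : 0 < A l j) (hj : x j < b) : (A *ᵥ x) l < b := by
  simpa [mulVec_neg] using
    lt_mulVec_apply hnn hrow (x := -x) (a := -b) (fun j ↦ neg_le_neg (h j)) hlj (neg_lt_neg hj)

lemma iInf_le_iInf_mulVec [Nonempty m] (x : ι → ℝ) : ⨅ j, x j ≤ ⨅ l, (A *ᵥ x) l :=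
  le_ciInf (le_mulVec_apply hnn hrow (ciInf_le (Finite.bddBelow_range x)))

lemma iSup_mulVec_le_iSup [Nonempty m] (x : ι → ℝ) : ⨆ l, (A *ᵥ x) l ≤ ⨆ j, x j :=
  ciSup_le (mulVec_apply_le hnn hrow (le_ciSup (Finite.bddAbove_range x)))

end RowStochastic

section Square

variable {A : Matrix ι ι ℝ} (hnn : ∀ i j, 0 ≤ A i j) (hrow : ∀ i, ∑ j, A i j = 1)
include hnn hrow

lemma IsScrambling.iInf_lt_iInf_mulVec_or_iSup_mulVec_lt_iSup (hA : IsScrambling A)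
    {x : ι → ℝ} (hx : ¬ ∀ i j, x i = x j) :
    ⨅ i, x i < ⨅ i, (A *ᵥ x) i ∨ ⨆ i, (A *ᵥ x) i < ⨆ i, x i := by
  have : Nonempty ι := by contrapose! hx; exact fun i ↦ isEmptyElim i
  obtain ⟨i, hi⟩ := exists_eq_ciInf_of_finite (f := A *ᵥ x)
  obtain ⟨k, hk⟩ := exists_eq_ciSup_of_finite (f := A *ᵥ x)
  obtain ⟨j, hij, hkj⟩ := hA i k
  have hlow (j) : ⨅ i, x i ≤ x j := ciInf_le (Finite.bddBelow_range x) j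
  have hhigh (j) : x j ≤ ⨆ i, x i := le_ciSup (Finite.bddAbove_range x) j
  rcases (hlow j).lt_or_eq with hj | hj
  · exact .inl (hi ▸ lt_mulVec_apply hnn hrow hlow hij hj)
  · refine .inr (hk ▸ mulVec_apply_lt hnn hrow hhigh hkj ?_)
    exact hj ▸ ciInf_lt_ciSup_of_not_forall_eq hx

lemma IsScrambling.isProperAveraging (hA : IsScrambling A) : IsProperAveraging (A *ᵥ ·) := by
  intro x hx
  have : Nonempty ι := by contrapose! hx; exact fun i ↦ isEmptyElim i
  have hI := (ciInf_lt_ciSup_of_not_forall_eq hx).le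
  rcases hA.iInf_lt_iInf_mulVec_or_iSup_mulVec_lt_iSup hnn hrow hx with h | h
  · exact Icc_ssubset_Icc_left hI h (iSup_mulVec_le_iSup hnn hrow x)
  · exact Icc_ssubset_Icc_right hI (iInf_le_iInf_mulVec hnn hrow x) h

lemma IsProperAveraging.isScrambling (hA : IsProperAveraging (A *ᵥ ·)) : IsScrambling A := by
  intro i k
  by_contra! hik
  set x : ι → ℝ := fun j ↦ if 0 < A i j then 1 else 0
  have hAi : (A *ᵥ x) i = 1 := by
    rw [← hrow i]
    refine Finset.sum_congr rfl fun j _ ↦ ?_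
    by_cases h : 0 < A i j
    · simp [x, h]
    · simp [x, le_antisymm (not_lt.mp h) (hnn i j)]
  have hAk : (A *ᵥ x) k = 0 := Finset.sum_eq_zero fun j _ ↦ by
    by_cases h : 0 < A i j
    · simp [(hik j h).antisymm (hnn k j)]
    · simp [x, h]
  have hx : ¬ ∀ a b, x a = x b := fun h ↦ by
    have hconst : x = fun _ ↦ x i := funext fun j ↦ h j i
    rw [hconst, mulVec_const_apply hrow] at hAi hAk
    exact one_ne_zero (hAi.symm.trans hAk)
  have hrange : Icc (⨅ j, x j) (⨆ j, x j) ⊆ Icc 0 1 :=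
    Icc_subset_Icc (Real.iInf_nonneg fun j ↦ by positivity)
      (Real.iSup_le (fun j ↦ by simp only [x]; split_ifs <;> norm_num) zero_le_one)
  have himage : Icc 0 1 ⊆ Icc (⨅ l, (A *ᵥ x) l) (⨆ l, (A *ᵥ x) l) :=
    Icc_subset_Icc (hAk ▸ ciInf_le (Finite.bddBelow_range _) k)
      (hAi ▸ le_ciSup (Finite.bddAbove_range _) i)
  exact (hA x hx).2 (hrange.trans himage)

end Square

end Matrix

theorem scrambling_iff_proper_general {n : ℕ} (A : Matrix (Fin n) (Fin n) ℝ)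
    (hnn : ∀ i j, 0 ≤ A i j) (hrow : ∀ i, ∑ j, A i j = 1) :
    (∀ i k, ∃ j, 0 < A i j ∧ 0 < A k j) ↔
      (∀ x : Fin n → ℝ, (¬ ∀ i j, x i = x j) →
        Set.Icc (⨅ i, A.mulVec x i) (⨆ i, A.mulVec x i) ⊂
          Set.Icc (⨅ i, x i) (⨆ i, x i)) := by
  exact ⟨Matrix.IsScrambling.isProperAveraging hnn hrow,
    Matrix.IsProperAveraging.isScrambling hnn hrow⟩

/-- A row-stochastic matrix A is scrambling (any two rows have a common index with
positive entries) if and only if x ↦ Ax is a proper averaging map: for every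
non-constant vector x the interval [min_i (Ax)^i, max_i (Ax)^i] is strictly contained
in [min_i x^i, max_i x^i]. -/
theorem scrambling_iff_proper {n : ℕ} (hn : 0 < n) (A : Matrix (Fin n) (Fin n) ℝ)
    (hnn : ∀ i j, 0 ≤ A i j) (hrow : ∀ i, ∑ j, A i j = 1) :
    (∀ i k, ∃ j, 0 < A i j ∧ 0 < A k j) ↔
      (∀ x : Fin n → ℝ, (¬ ∀ i j, x i = x j) →
        Set.Icc (⨅ i, A.mulVec x i) (⨆ i, A.mulVec x i) ⊂
          Set.Icc (⨅ i, x i) (⨆ i, x i)) :=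
  scrambling_iff_proper_general A hnn hrow
end
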